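/- For z_g > d and z ∈ [d, z_g], the function ĝ'(z) = β·((θ₂(u₀)-θ₂(0))/(θ₁(0)+θ₂(0)))·(e^{-θ₁(0)(z_g - z)} - e^{θ₂(0)(z_g - z)}) - β e^{θ₂(0)(z_g - z)} satisfies ĝ'(z) ≤ -β, with equality at z = z_g. -/
import Mathlib


open Real Set

noncomputable def th1 (μ σ r u : ℝ) : ℝ := (Real.sqrt ((μ - u)^2 + 2*r*σ^2) + (μ - u)) / σ^2
noncomputable def th2 (μ σ r u : ℝ) : ℝ := (Real.sqrt ((μ - u)^2 + 2*r*σ^2) - (μ - u)) / σ^2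

noncomputable def gHatDeriv (μ σ r u₀ β zg z : ℝ) : ℝ :=
  β * ((th2 μ σ r u₀ - th2 μ σ r 0) / (th1 μ σ r 0 + th2 μ σ r 0)) *
      (Real.exp (-(th1 μ σ r 0) * (zg - z)) - Real.exp (th2 μ σ r 0 * (zg - z))) -
    β * Real.exp (th2 μ σ r 0 * (zg - z))

lemma sqrt_gt_self (x c : ℝ) (hc : 0 < c) : x < Real.sqrt (x^2 + c) := by
  have h1 : Real.sqrt (x^2 + c) ^ 2 = x^2 + c := Real.sq_sqrt (by positivity)
  have h2 : 0 ≤ Real.sqrt (x^2 + c) := Real.sqrt_nonneg _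
  nlinarith

lemma th1_pos (μ σ r : ℝ) (hσ : 0 < σ) (hr : 0 < r) : 0 < th1 μ σ r 0 := by
  unfold th1
  have h := sqrt_gt_self (-(μ - 0)) (2*r*σ^2) (by positivity)
  have heq : (-(μ - 0))^2 = (μ - 0)^2 := by ring
  rw [heq] at h
  have : 0 < Real.sqrt ((μ - 0)^2 + 2*r*σ^2) + (μ - 0) := by linarith
  positivity

lemma th2_pos (μ σ r u : ℝ) (hσ : 0 < σ) (hr : 0 < r) : 0 < th2 μ σ r u := by
  unfold th2
  have := sqrt_gt_self (μ - u) (2*r*σ^2) (by positivity)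
  have : 0 < Real.sqrt ((μ - u)^2 + 2*r*σ^2) - (μ - u) := by linarith
  positivity

lemma th2_mono (μ σ r u₀ : ℝ) (hσ : 0 < σ) (hr : 0 < r) (hu₀ : 0 < u₀) :
    th2 μ σ r 0 ≤ th2 μ σ r u₀ := by
  unfold th2
  have key : Real.sqrt ((μ - 0)^2 + 2*r*σ^2) - (μ - 0)
      ≤ Real.sqrt ((μ - u₀)^2 + 2*r*σ^2) - (μ - u₀) := by
    have h1 : Real.sqrt ((μ - 0)^2 + 2*r*σ^2) ^ 2 = (μ-0)^2 + 2*r*σ^2 :=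
      Real.sq_sqrt (by positivity)
    have h2 : Real.sqrt ((μ - u₀)^2 + 2*r*σ^2) ^ 2 = (μ-u₀)^2 + 2*r*σ^2 :=
      Real.sq_sqrt (by positivity)
    have h3 := sqrt_gt_self (μ - 0) (2*r*σ^2) (by positivity)
    have h4 := sqrt_gt_self (μ - u₀) (2*r*σ^2) (by positivity)
    have h5 : 0 < Real.sqrt ((μ - 0)^2 + 2*r*σ^2) - (μ - 0) := by linarith
    have h6 : 0 < Real.sqrt ((μ - u₀)^2 + 2*r*σ^2) - (μ - u₀) := by linarith
    have hST : 0 < Real.sqrt ((μ - 0)^2 + 2*r*σ^2) + Real.sqrt ((μ - u₀)^2 + 2*r*σ^2) := by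
      nlinarith [Real.sqrt_nonneg ((μ - 0)^2 + 2*r*σ^2), Real.sqrt_nonneg ((μ - u₀)^2 + 2*r*σ^2)]
    nlinarith [mul_pos hST hu₀]
  have hσ2 : (0:ℝ) < σ^2 := by positivity
  exact div_le_div_of_nonneg_right key hσ2.le |>.trans_eq rfl

theorem stmt17 (μ σ r u₀ β d zg : ℝ) (hσ : 0 < σ) (hr : 0 < r) (hu₀ : 0 < u₀) (hβ : 0 < β)
    (hd : 0 < d) (hzg : zg > d) :
    (∀ z ∈ Set.Icc d zg, gHatDeriv μ σ r u₀ β zg z ≤ -β) ∧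
    gHatDeriv μ σ r u₀ β zg zg = -β := by
  have h1 := th1_pos μ σ r hσ hr
  have h2 := th2_pos μ σ r 0 hσ hr
  have h2' := th2_pos μ σ r u₀ hσ hr
  have hmono := th2_mono μ σ r u₀ hσ hr hu₀
  constructor
  · intro z hz
    obtain ⟨hzd, hzzg⟩ := hz
    set t := zg - z with ht
    have htnn : 0 ≤ t := by linarith
    have hA : 0 ≤ (th2 μ σ r u₀ - th2 μ σ r 0) / (th1 μ σ r 0 + th2 μ σ r 0) := by
      apply div_nonneg <;> linarith
    have hexp1 : Real.exp (-(th1 μ σ r 0) * t) ≤ Real.exp (th2 μ σ r 0 * t) := by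
      apply Real.exp_le_exp.2
      nlinarith
    have hexp2 : (1:ℝ) ≤ Real.exp (th2 μ σ r 0 * t) := by
      rw [← Real.exp_zero]
      apply Real.exp_le_exp.2
      positivity
    have hterm1 : β * ((th2 μ σ r u₀ - th2 μ σ r 0) / (th1 μ σ r 0 + th2 μ σ r 0)) *
        (Real.exp (-(th1 μ σ r 0) * t) - Real.exp (th2 μ σ r 0 * t)) ≤ 0 := by
      apply mul_nonpos_of_nonneg_of_nonpos
      · positivity
      · linarith
    have hterm2 : β * Real.exp (th2 μ σ r 0 * t) ≥ β := by nlinarith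
    unfold gHatDeriv
    rw [← ht]
    linarith
  · unfold gHatDeriv
    simp
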